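/- arXiv:math-ph/0604021 — 7 statements merged into one kernel-verified Lean document; each statement's English description precedes it below -/
import Mathlib

section
/- Let a, b, c₁, c₂, c₃ be real constants with b ≠ 0. Define, on the domain {(t,x) : t ≠ −a}, u₀(t,x) = (b − x)/(t + a) and u₁(t,x) = (c₁/(t + a))·exp((b − x)/(t + a)) + c₃x/(b(t + a)²) + (c₂(t + a) − c₃)/(t + a)². Then ∂u₀/∂t = u₀·∂u₀/∂x and ∂u₁/∂t = u₀·∂u₁/∂x + u₁·∂u₀/∂x + ∂³u₀/∂x³ at every point of the domain; that is, u = u₀ + ε u₁ solves the KdV equation u_t = u u_x + ε u_xxx up to terms of order ε². -/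
/-- Partial derivative in `t` of a function `u : ℝ → ℝ → ℝ`, `u = u t x`. -/
noncomputable def ptderiv (u : ℝ → ℝ → ℝ) : ℝ → ℝ → ℝ :=
  fun t x => deriv (fun s => u s x) t

/-- Partial derivative in `x` of a function `u : ℝ → ℝ → ℝ`, `u = u t x`. -/
noncomputable def pxderiv (u : ℝ → ℝ → ℝ) : ℝ → ℝ → ℝ :=
  fun t x => deriv (fun y => u t y) x

/-!
The leading term `u₀ = (b - x)/(t + a)` is the classical self-similar solution of the inviscid
Burgers equation, and it is affine in `x`, so its third `x`-derivative vanishes. Hence `u₁` only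
has to solve the homogeneous linearised equation `u₁_t = u₀ u₁_x - u₁/(t + a)`, which the three
families `e^{(b-x)/(t+a)}/(t+a)`, `1/(t+a)` and `x/(b(t+a)²) - 1/(t+a)²` do; the identities are
checked by differentiating and clearing denominators.
-/

open Real

noncomputable def kdvLeading (a b : ℝ) : ℝ → ℝ → ℝ := fun t x => (b - x) / (t + a)

noncomputable def kdvCorrection (a b c₁ c₂ c₃ : ℝ) : ℝ → ℝ → ℝ := fun t x =>
  c₁ / (t + a) * exp ((b - x) / (t + a)) + c₃ * x / (b * (t + a) ^ 2)
    + (c₂ * (t + a) - c₃) / (t + a) ^ 2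

theorem pxderiv_pxderiv_eq_zero {u : ℝ → ℝ → ℝ} (v : ℝ → ℝ)
    (h : ∀ t y, HasDerivAt (u t) (v t) y) : pxderiv (pxderiv u) = 0 := by
  have hu : pxderiv u = fun t _ => v t := funext₂ fun t y => (h t y).deriv
  funext t x
  show deriv (fun y => pxderiv u t y) x = 0
  simp [hu]

section

variable {a b t : ℝ}

theorem hasDerivAt_div_add_const (c : ℝ) (ht : t + a ≠ 0) :
    HasDerivAt (fun s => c / (s + a)) (-c / (t + a) ^ 2) t :=
  ((hasDerivAt_const t c).div ((hasDerivAt_id t).add_const a) ht).congr_deriv (by simp)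

theorem kdvLeading_hasDerivAt_x (y : ℝ) :
    HasDerivAt (kdvLeading a b t) (-(t + a)⁻¹) y :=
  (((hasDerivAt_const y b).sub (hasDerivAt_id y)).div_const (t + a)).congr_deriv
    (by simp [div_eq_mul_inv])

theorem kdvLeading_hasDerivAt_t (x : ℝ) (ht : t + a ≠ 0) :
    HasDerivAt (fun s => kdvLeading a b s x) (-(b - x) / (t + a) ^ 2) t :=
  hasDerivAt_div_add_const (b - x) ht

theorem kdvLeading_pxderiv_pxderiv_pxderiv : pxderiv (pxderiv (pxderiv (kdvLeading a b))) = 0 := by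
  rw [pxderiv_pxderiv_eq_zero _ fun t y => kdvLeading_hasDerivAt_x y]
  funext t x
  simp [pxderiv]

theorem kdvCorrection_hasDerivAt_x (c₁ c₂ c₃ x : ℝ) :
    HasDerivAt (kdvCorrection a b c₁ c₂ c₃ t)
      (-c₁ / (t + a) ^ 2 * exp ((b - x) / (t + a)) + c₃ / (b * (t + a) ^ 2)) x := by
  have hexp := (kdvLeading_hasDerivAt_x (a := a) (b := b) (t := t) x).exp.const_mul (c₁ / (t + a))
  have hlin := ((hasDerivAt_id x).const_mul c₃).div_const (b * (t + a) ^ 2)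
  refine ((hexp.add hlin).add_const ((c₂ * (t + a) - c₃) / (t + a) ^ 2)).congr_deriv ?_
  simp only [kdvLeading, div_eq_mul_inv, mul_inv, ← inv_pow]
  ring

theorem kdvCorrection_hasDerivAt_t (c₁ c₂ c₃ x : ℝ) (hb : b ≠ 0) (ht : t + a ≠ 0) :
    HasDerivAt (fun s => kdvCorrection a b c₁ c₂ c₃ s x)
      (-c₁ / (t + a) ^ 2 * exp ((b - x) / (t + a))
        - c₁ * (b - x) / (t + a) ^ 3 * exp ((b - x) / (t + a))
        - 2 * c₃ * x / (b * (t + a) ^ 3) - c₂ / (t + a) ^ 2 + 2 * c₃ / (t + a) ^ 3) t := by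
  have hs : HasDerivAt (fun s => s + a) 1 t := (hasDerivAt_id t).add_const a
  have hexp := (hasDerivAt_div_add_const c₁ ht).mul (kdvLeading_hasDerivAt_t (b := b) x ht).exp
  have hlin := (hasDerivAt_const t (c₃ * x)).div ((hs.pow 2).const_mul b)
    (mul_ne_zero hb (pow_ne_zero 2 ht))
  have hrest := ((hs.const_mul c₂).sub_const c₃).div (hs.pow 2) (pow_ne_zero 2 ht)
  refine ((hexp.add hlin).add hrest).congr_deriv ?_
  simp only [kdvLeading, Pi.pow_apply]
  field_simp
  ring

theorem kdvLeading_burgers (x : ℝ) (ht : t + a ≠ 0) :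
    ptderiv (kdvLeading a b) t x = kdvLeading a b t x * pxderiv (kdvLeading a b) t x := by
  rw [ptderiv, pxderiv, (kdvLeading_hasDerivAt_t x ht).deriv, (kdvLeading_hasDerivAt_x x).deriv,
    kdvLeading]
  field_simp

theorem kdvCorrection_linearized (c₁ c₂ c₃ x : ℝ) (hb : b ≠ 0) (ht : t + a ≠ 0) :
    ptderiv (kdvCorrection a b c₁ c₂ c₃) t x
      = kdvLeading a b t x * pxderiv (kdvCorrection a b c₁ c₂ c₃) t x
        + kdvCorrection a b c₁ c₂ c₃ t x * pxderiv (kdvLeading a b) t x := by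
  rw [ptderiv, pxderiv, pxderiv, (kdvCorrection_hasDerivAt_t c₁ c₂ c₃ x hb ht).deriv,
    (kdvCorrection_hasDerivAt_x c₁ c₂ c₃ x).deriv, (kdvLeading_hasDerivAt_x x).deriv,
    kdvLeading, kdvCorrection]
  field_simp
  ring

end

/-- The pair `u₀ = (b-x)/(t+a)`,
`u₁ = (c₁/(t+a)) e^{(b-x)/(t+a)} + c₃ x/(b(t+a)²) + (c₂(t+a) - c₃)/(t+a)²`
solves the KdV equation `u_t = u u_x + ε u_xxx` up to terms of order `ε²`:
`∂u₀/∂t = u₀ ∂u₀/∂x` and `∂u₁/∂t = u₀ ∂u₁/∂x + u₁ ∂u₀/∂x + ∂³u₀/∂x³` on `{t ≠ -a}`. -/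
theorem stmt5 (a b c₁ c₂ c₃ : ℝ) (hb : b ≠ 0) :
    let u₀ : ℝ → ℝ → ℝ := fun t x => (b - x) / (t + a)
    let u₁ : ℝ → ℝ → ℝ := fun t x =>
      c₁ / (t + a) * Real.exp ((b - x) / (t + a)) + c₃ * x / (b * (t + a) ^ 2)
        + (c₂ * (t + a) - c₃) / (t + a) ^ 2
    ∀ t x : ℝ, t ≠ -a →
      ptderiv u₀ t x = u₀ t x * pxderiv u₀ t x ∧
      ptderiv u₁ t x
        = u₀ t x * pxderiv u₁ t x + u₁ t x * pxderiv u₀ t x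
          + pxderiv (pxderiv (pxderiv u₀)) t x := by
  intro u₀ u₁ t x ht
  have hs : t + a ≠ 0 := fun h => ht (eq_neg_of_add_eq_zero_left h)
  have hxxx : pxderiv (pxderiv (pxderiv u₀)) = 0 := kdvLeading_pxderiv_pxderiv_pxderiv
  rw [hxxx, Pi.zero_apply, Pi.zero_apply, add_zero]
  exact ⟨kdvLeading_burgers x hs, kdvCorrection_linearized c₁ c₂ c₃ x hb hs⟩
end

section
/- Let u : Ω → ℝ be a C⁴ function on an open set Ω ⊆ ℝ² satisfying the transport equation ∂u/∂t = u·∂u/∂x on Ω. Set η(t,x) = u_x·u_xxx − 3·u_xx², evaluated along u. Then the determining expression satisfies the identity ∂_t η − u_x·η − u·∂_x η = 4·u_x·η on Ω. In particular, it vanishes at every point where the constraint η = 0 holds, so η = u_x u_xxx − 3u_xx² is a nonclassical Lie–Bäcklund symmetry of the transport equation. -/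
/-!
Write `L = ∂_t - u ∂_x` for the derivative along the characteristics of `u_t = u u_x`, so that
`L u = 0`. By Clairaut, `L` and `∂_x` satisfy `L (∂_x f) = ∂_x (L f) + u_x ∂_x f`, which gives
in turn `L u_x = u_x²`, `L u_xx = 3 u_x u_xx` and `L u_xxx = 3 u_xx² + 4 u_x u_xxx`. Since `L` is a
derivation, `L η = 5 u_x η`, and the determining expression is `L η - u_x η = 4 u_x η`.
-/

open Function Filter Topology Set

section Transport

variable {E : Type*} [NormedAddCommGroup E] [NormedSpace ℝ E] {v w : E} {F f g R : E → ℝ}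
  {q : E} {Ω : Set E}

noncomputable def dirDeriv (v : E) (f : E → ℝ) : E → ℝ := fun q => fderiv ℝ f q v

lemma dirDeriv_congr (h : f =ᶠ[𝓝 q] g) : dirDeriv v f q = dirDeriv v g q := by
  simp only [dirDeriv, h.fderiv_eq]

lemma dirDeriv_zero : dirDeriv v (0 : E → ℝ) q = 0 := by
  simp [dirDeriv]

lemma dirDeriv_sub (hf : DifferentiableAt ℝ f q) (hg : DifferentiableAt ℝ g q) :
    dirDeriv v (fun r => f r - g r) q = dirDeriv v f q - dirDeriv v g q := by
  simp [dirDeriv, fderiv_fun_sub hf hg]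

lemma dirDeriv_const_mul (c : ℝ) (hf : DifferentiableAt ℝ f q) :
    dirDeriv v (fun r => c * f r) q = c * dirDeriv v f q := by
  simp [dirDeriv, fderiv_const_mul hf]

lemma dirDeriv_mul (hf : DifferentiableAt ℝ f q) (hg : DifferentiableAt ℝ g q) :
    dirDeriv v (fun r => f r * g r) q = f q * dirDeriv v g q + dirDeriv v f q * g q := by
  simp [dirDeriv, fderiv_fun_mul hf hg, mul_comm]

lemma ContDiffAt.dirDeriv {n : ℕ∞} (h : ContDiffAt ℝ (n + 1) f q) :
    ContDiffAt ℝ n (dirDeriv v f) q :=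
  (h.fderiv_right le_rfl).clm_apply contDiffAt_const

lemma ContDiffOn.dirDeriv {n : ℕ∞} (hΩ : IsOpen Ω) (h : ContDiffOn ℝ (n + 1) f Ω) :
    ContDiffOn ℝ n (dirDeriv v f) Ω := fun _ hq =>
  (h.contDiffAt (hΩ.mem_nhds hq)).dirDeriv.contDiffWithinAt

lemma dirDeriv_comm (hf : ContDiffAt ℝ 2 f q) :
    dirDeriv w (dirDeriv v f) q = dirDeriv v (dirDeriv w f) q := by
  have hd : DifferentiableAt ℝ (fderiv ℝ f) q :=
    (hf.fderiv_right (m := 1) (by norm_num)).differentiableAt (by norm_num)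
  change fderiv ℝ (fun r => fderiv ℝ f r v) q w = fderiv ℝ (fun r => fderiv ℝ f r w) q v
  simp [fderiv_clm_apply hd (differentiableAt_const _), (hf.isSymmSndFDerivAt (by simp)).eq]

noncomputable def transportDeriv (v w : E) (F f : E → ℝ) : E → ℝ := fun q =>
  dirDeriv v f q - F q * dirDeriv w f q

lemma transportDeriv_sub (hf : DifferentiableAt ℝ f q) (hg : DifferentiableAt ℝ g q) :
    transportDeriv v w F (fun r => f r - g r) q
      = transportDeriv v w F f q - transportDeriv v w F g q := by
  simp only [transportDeriv, dirDeriv_sub hf hg]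
  ring

lemma transportDeriv_const_mul (c : ℝ) (hf : DifferentiableAt ℝ f q) :
    transportDeriv v w F (fun r => c * f r) q = c * transportDeriv v w F f q := by
  simp only [transportDeriv, dirDeriv_const_mul c hf]
  ring

lemma transportDeriv_mul (hf : DifferentiableAt ℝ f q) (hg : DifferentiableAt ℝ g q) :
    transportDeriv v w F (fun r => f r * g r) q
      = f q * transportDeriv v w F g q + transportDeriv v w F f q * g q := by
  simp only [transportDeriv, dirDeriv_mul hf hg]
  ring

lemma transportDeriv_dirDeriv (hf : ContDiffAt ℝ 2 f q) (hF : DifferentiableAt ℝ F q) :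
    transportDeriv v w F (dirDeriv w f) q
      = dirDeriv w (transportDeriv v w F f) q + dirDeriv w F q * dirDeriv w f q := by
  have hvf : DifferentiableAt ℝ (dirDeriv v f) q :=
    (hf.dirDeriv (n := 1)).differentiableAt one_ne_zero
  have hwf : DifferentiableAt ℝ (dirDeriv w f) q :=
    (hf.dirDeriv (n := 1)).differentiableAt one_ne_zero
  change _ = dirDeriv w (fun r => dirDeriv v f r - F r * dirDeriv w f r) q + _
  rw [transportDeriv, dirDeriv_sub hvf (hF.fun_mul hwf), dirDeriv_mul hF hwf, dirDeriv_comm hf]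
  ring

lemma transportDeriv_dirDeriv_of_eqOn (hΩ : IsOpen Ω) (hf : ContDiffOn ℝ 2 f Ω)
    (hF : DifferentiableOn ℝ F Ω) (hR : EqOn (transportDeriv v w F f) R Ω) (hq : q ∈ Ω) :
    transportDeriv v w F (dirDeriv w f) q = dirDeriv w R q + dirDeriv w F q * dirDeriv w f q := by
  rw [transportDeriv_dirDeriv (hf.contDiffAt (hΩ.mem_nhds hq))
      (hF.differentiableAt (hΩ.mem_nhds hq)),
    dirDeriv_congr (eventually_of_mem (hΩ.mem_nhds hq) hR)]

noncomputable def symmetryChar (w : E) (F : E → ℝ) : E → ℝ := fun r =>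
  dirDeriv w F r * dirDeriv w (dirDeriv w (dirDeriv w F)) r
    - 3 * (dirDeriv w (dirDeriv w F) r * dirDeriv w (dirDeriv w F) r)

lemma contDiffOn_symmetryChar (hΩ : IsOpen Ω) (hF : ContDiffOn ℝ 4 F Ω) :
    ContDiffOn ℝ 1 (symmetryChar w F) Ω := by
  have hF₁ : ContDiffOn ℝ 3 (dirDeriv w F) Ω := hF.dirDeriv (n := 3) hΩ
  have hF₂ : ContDiffOn ℝ 2 (dirDeriv w (dirDeriv w F)) Ω := hF₁.dirDeriv (n := 2) hΩ
  have hF₃ := hF₂.dirDeriv (v := w) (n := 1) hΩ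
  exact ((hF₁.of_le (by norm_num)).mul hF₃).sub
    (((hF₂.of_le (by norm_num)).mul (hF₂.of_le (by norm_num))).const_smul (3 : ℝ))

theorem transportDeriv_symmetryChar (hΩ : IsOpen Ω) (hF : ContDiffOn ℝ 4 F Ω)
    (hL : EqOn (transportDeriv v w F F) 0 Ω) (hq : q ∈ Ω) :
    transportDeriv v w F (symmetryChar w F) q = 5 * dirDeriv w F q * symmetryChar w F q := by
  set F₁ := dirDeriv w F
  set F₂ := dirDeriv w F₁
  set F₃ := dirDeriv w F₂
  have hF₁ : ContDiffOn ℝ 3 F₁ Ω := hF.dirDeriv (n := 3) hΩ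
  have hF₂ : ContDiffOn ℝ 2 F₂ Ω := hF₁.dirDeriv (n := 2) hΩ
  have hF₃ : ContDiffOn ℝ 1 F₃ Ω := hF₂.dirDeriv (n := 1) hΩ
  have hd {n : WithTop ℕ∞} {f : E → ℝ} (hf : ContDiffOn ℝ n f Ω) (hn : n ≠ 0) {r : E}
      (hr : r ∈ Ω) : DifferentiableAt ℝ f r :=
    (hf.differentiableOn hn).differentiableAt (hΩ.mem_nhds hr)
  have hdF : DifferentiableOn ℝ F Ω := hF.differentiableOn (by norm_num)
  have hL₁ : EqOn (transportDeriv v w F F₁) (fun r => F₁ r * F₁ r) Ω := fun r hr => by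
    rw [transportDeriv_dirDeriv_of_eqOn hΩ (hF.of_le (by norm_num)) hdF hL hr, dirDeriv_zero,
      zero_add]
  have hL₂ : EqOn (transportDeriv v w F F₂) (fun r => 3 * (F₁ r * F₂ r)) Ω := fun r hr => by
    rw [transportDeriv_dirDeriv_of_eqOn hΩ (hF₁.of_le (by norm_num)) hdF hL₁ hr,
      dirDeriv_mul (hd hF₁ (by norm_num) hr) (hd hF₁ (by norm_num) hr)]
    ring
  have hL₃ : transportDeriv v w F F₃ q = 3 * (F₂ q * F₂ q) + 4 * (F₁ q * F₃ q) := by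
    rw [transportDeriv_dirDeriv_of_eqOn hΩ hF₂ hdF hL₂ hq,
      dirDeriv_const_mul 3 ((hd hF₁ (by norm_num) hq).fun_mul (hd hF₂ (by norm_num) hq)),
      dirDeriv_mul (hd hF₁ (by norm_num) hq) (hd hF₂ (by norm_num) hq)]
    ring
  have d₁ := hd hF₁ (by norm_num) hq
  have d₂ := hd hF₂ (by norm_num) hq
  have d₃ := hd hF₃ one_ne_zero hq
  change transportDeriv v w F (fun r => F₁ r * F₃ r - 3 * (F₂ r * F₂ r)) q
    = 5 * F₁ q * (F₁ q * F₃ q - 3 * (F₂ q * F₂ q))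
  rw [transportDeriv_sub (d₁.fun_mul d₃) ((d₂.fun_mul d₂).const_mul 3),
    transportDeriv_const_mul 3 (d₂.fun_mul d₂), transportDeriv_mul d₁ d₃,
    transportDeriv_mul d₂ d₂, hL₁ hq, hL₂ hq, hL₃]
  ring

end Transport

section PartialDerivatives

variable {f : ℝ → ℝ → ℝ} {G : ℝ × ℝ → ℝ} {Ω : Set (ℝ × ℝ)}

lemma ptderiv_eq_dirDeriv (hΩ : IsOpen Ω) (h : EqOn (uncurry f) G Ω) {t x : ℝ}
    (hp : (t, x) ∈ Ω) (hG : DifferentiableAt ℝ G (t, x)) :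
    ptderiv f t x = dirDeriv (1, 0) G (t, x) := by
  have hev : (fun s => f s x) =ᶠ[𝓝 t] fun s => G (s, x) :=
    ((Continuous.prodMk_left x).continuousAt.eventually_mem (hΩ.mem_nhds hp)).mono
      fun _ hs => h hs
  have hline : HasDerivAt (fun s : ℝ => (s, x)) ((1 : ℝ), (0 : ℝ)) t :=
    (hasDerivAt_id t).prodMk (hasDerivAt_const t x)
  exact hev.deriv_eq.trans (hG.hasFDerivAt.comp_hasDerivAt t hline).deriv

lemma pxderiv_eq_dirDeriv (hΩ : IsOpen Ω) (h : EqOn (uncurry f) G Ω) {t x : ℝ}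
    (hp : (t, x) ∈ Ω) (hG : DifferentiableAt ℝ G (t, x)) :
    pxderiv f t x = dirDeriv (0, 1) G (t, x) := by
  have hev : (fun y => f t y) =ᶠ[𝓝 x] fun y => G (t, y) :=
    ((Continuous.prodMk_right t).continuousAt.eventually_mem (hΩ.mem_nhds hp)).mono
      fun _ hy => h hy
  have hline : HasDerivAt (fun y : ℝ => (t, y)) ((0 : ℝ), (1 : ℝ)) x :=
    (hasDerivAt_const x t).prodMk (hasDerivAt_id x)
  exact hev.deriv_eq.trans (hG.hasFDerivAt.comp_hasDerivAt x hline).deriv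

lemma eqOn_uncurry_pxderiv (hΩ : IsOpen Ω) (hG : DifferentiableOn ℝ G Ω)
    (h : EqOn (uncurry f) G Ω) : EqOn (uncurry (pxderiv f)) (dirDeriv (0, 1) G) Ω :=
  fun _ hp => pxderiv_eq_dirDeriv hΩ h hp (hG.differentiableAt (hΩ.mem_nhds hp))

end PartialDerivatives

/-- For any C⁴ solution of `u_t = u u_x` on an open set `Ω`, the characteristic
`η = u_x u_xxx - 3 u_xx²` evaluated along `u` satisfies the identity
`∂_t η - u_x η - u ∂_x η = 4 u_x η`; in particular the determining expression vanishes
wherever the constraint `η = 0` holds, so `η = u_x u_xxx - 3 u_xx²` is a nonclassical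
Lie–Bäcklund symmetry of the transport equation. -/
theorem stmt7 (u : ℝ → ℝ → ℝ) (Ω : Set (ℝ × ℝ)) (hΩ : IsOpen Ω)
    (hu : ContDiffOn ℝ 4 (Function.uncurry u) Ω)
    (heq : ∀ t x : ℝ, (t, x) ∈ Ω → ptderiv u t x = u t x * pxderiv u t x) :
    let η : ℝ → ℝ → ℝ := fun t x =>
      pxderiv u t x * pxderiv (pxderiv (pxderiv u)) t x - 3 * (pxderiv (pxderiv u) t x) ^ 2
    ∀ t x : ℝ, (t, x) ∈ Ω →
      ptderiv η t x - pxderiv u t x * η t x - u t x * pxderiv η t x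
          = 4 * pxderiv u t x * η t x ∧
      (η t x = 0 →
        ptderiv η t x - pxderiv u t x * η t x - u t x * pxderiv η t x = 0) := by
  intro η t x hp
  set F : ℝ × ℝ → ℝ := uncurry u
  have hF₁ : ContDiffOn ℝ 3 (dirDeriv (0, 1) F) Ω := hu.dirDeriv (n := 3) hΩ
  have hF₂ := hF₁.dirDeriv (v := (0, 1)) (n := 2) hΩ
  have e₁ : EqOn (uncurry (pxderiv u)) (dirDeriv (0, 1) F) Ω :=
    eqOn_uncurry_pxderiv hΩ (hu.differentiableOn (by norm_num)) fun _ _ => rfl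
  have e₂ := eqOn_uncurry_pxderiv hΩ (hF₁.differentiableOn (by norm_num)) e₁
  have e₃ := eqOn_uncurry_pxderiv hΩ (hF₂.differentiableOn (by norm_num)) e₂
  have eη : EqOn (uncurry η) (symmetryChar (0, 1) F) Ω := fun p hp => by
    simp only [symmetryChar, ← e₁ hp, ← e₂ hp, ← e₃ hp, uncurry, η]
    ring
  have hL : EqOn (transportDeriv (1, 0) (0, 1) F F) 0 Ω := fun ⟨a, b⟩ hp => by
    have hdF := (hu.differentiableOn (by norm_num)).differentiableAt (hΩ.mem_nhds hp)
    rw [transportDeriv, Pi.zero_apply, ← ptderiv_eq_dirDeriv hΩ (fun _ _ => rfl) hp hdF,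
      ← pxderiv_eq_dirDeriv hΩ (fun _ _ => rfl) hp hdF, heq a b hp]
    exact sub_self _
  have hdη : DifferentiableAt ℝ (symmetryChar (0, 1) F) (t, x) :=
    ((contDiffOn_symmetryChar hΩ hu).differentiableOn one_ne_zero).differentiableAt
      (hΩ.mem_nhds hp)
  have key := transportDeriv_symmetryChar hΩ hu hL hp
  have hdet : ptderiv η t x - pxderiv u t x * η t x - u t x * pxderiv η t x
      = 4 * pxderiv u t x * η t x := by
    rw [ptderiv_eq_dirDeriv hΩ eη hp hdη, pxderiv_eq_dirDeriv hΩ eη hp hdη,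
      show η t x = _ from eη hp, show pxderiv u t x = _ from e₁ hp,
      show u t x = F (t, x) from rfl]
    rw [transportDeriv] at key
    linear_combination key
  exact ⟨hdet, fun h0 => by rw [hdet, h0, mul_zero]⟩
end

section
/- Define u(t,x) = 2·√(t² + t − x) − 2t − 1 on the open set Ω = {(t,x) ∈ ℝ² : t² + t − x > 0}. Then on Ω: (i) u satisfies the transport equation ∂u/∂t = u·∂u/∂x; (ii) u satisfies the constraint u_x·u_xxx − 3·u_xx² = 0; and (iii) u_x·u_xx = (1/2)(t² + t − x)^{−2} > 0, so the determining expression 2 u_x u_xx of the characteristic η = u_xx is nonzero along this solution (hence η = u_xx is not a classical Lie–Bäcklund symmetry of the transport equation). -/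
open Filter Topology

lemma hasDerivAt_sqrt_const_sub_zpow {c y : ℝ} (k : ℤ) (hy : y < c) :
    HasDerivAt (fun z => √(c - z) ^ k) (-(k / 2) * √(c - y) ^ (k - 2)) y := by
  have hs : 0 < √(c - y) := Real.sqrt_pos.2 (sub_pos.2 hy)
  have hsqrt : HasDerivAt (fun z => √(c - z)) (-1 / (2 * √(c - y))) y :=
    ((hasDerivAt_id y).const_sub c).sqrt (sub_pos.2 hy).ne'
  refine ((hasDerivAt_zpow k _ (Or.inl hs.ne')).comp y hsqrt).congr_deriv ?_
  rw [zpow_sub₀ hs.ne', zpow_sub₀ hs.ne']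
  field_simp

section

variable {u : ℝ → ℝ → ℝ} {q b : ℝ → ℝ}

lemma pxderiv_eq_of_eq_sqrt_zpow {a : ℝ} {k : ℤ}
    (hu : ∀ t y, y < q t → u t y = a * √(q t - y) ^ k + b t) {t y : ℝ} (hy : y < q t) :
    pxderiv u t y = -(a * k / 2) * √(q t - y) ^ (k - 2) := by
  have hloc : (fun z => u t z) =ᶠ[𝓝 y] fun z => a * √(q t - z) ^ k + b t :=
    (eventually_lt_nhds hy).mono fun z hz => hu t z hz
  rw [pxderiv, hloc.deriv_eq, (((hasDerivAt_sqrt_const_sub_zpow k hy).const_mul a).add_const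
    (b t)).deriv]
  ring

lemma pxderiv_iterate_of_eq_two_sqrt_add (hu : ∀ t y, y < q t → u t y = 2 * √(q t - y) + b t)
    {t y : ℝ} (hy : y < q t) :
    pxderiv u t y = -√(q t - y) ^ (-1 : ℤ) ∧
      pxderiv (pxderiv u) t y = -(1 / 2) * √(q t - y) ^ (-3 : ℤ) ∧
      pxderiv (pxderiv (pxderiv u)) t y = -(3 / 4) * √(q t - y) ^ (-5 : ℤ) := by
  have hux : ∀ t y, y < q t → pxderiv u t y = -1 * √(q t - y) ^ (-1 : ℤ) := fun t y hy => by
    rw [pxderiv_eq_of_eq_sqrt_zpow (k := 1) (fun t y hy => by rw [hu t y hy, zpow_one]) hy]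
    norm_num
  have huxx : ∀ t y, y < q t → pxderiv (pxderiv u) t y = -(1 / 2) * √(q t - y) ^ (-3 : ℤ) :=
    fun t y hy => by
      rw [pxderiv_eq_of_eq_sqrt_zpow (b := 0) (fun t y hy => by rw [hux t y hy, Pi.zero_apply,
        add_zero]) hy]
      norm_num
  refine ⟨by rw [hux t y hy, neg_one_mul], huxx t y hy, ?_⟩
  rw [pxderiv_eq_of_eq_sqrt_zpow (b := 0) (fun t y hy => by rw [huxx t y hy, Pi.zero_apply,
    add_zero]) hy]
  norm_num

end

/-- On `Ω = {t² + t - x > 0}`, the function `u = 2√(t² + t - x) - 2t - 1` solves the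
transport equation `u_t = u u_x`, satisfies the constraint `u_x u_xxx - 3 u_xx² = 0`,
and has `u_x u_xx = (1/2)(t² + t - x)⁻² > 0`, so the determining expression `2 u_x u_xx`
of `η = u_xx` is nonzero along this solution (hence `η = u_xx` is not a classical
Lie–Bäcklund symmetry of the transport equation). -/
theorem stmt8 :
    let u : ℝ → ℝ → ℝ := fun t x => 2 * Real.sqrt (t ^ 2 + t - x) - 2 * t - 1
    ∀ t x : ℝ, t ^ 2 + t - x > 0 →
      ptderiv u t x = u t x * pxderiv u t x ∧
      pxderiv u t x * pxderiv (pxderiv (pxderiv u)) t x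
          - 3 * (pxderiv (pxderiv u) t x) ^ 2 = 0 ∧
      pxderiv u t x * pxderiv (pxderiv u) t x = 1 / 2 * (t ^ 2 + t - x) ^ (-2 : ℤ) ∧
      0 < pxderiv u t x * pxderiv (pxderiv u) t x := by
  intro u t x hw
  obtain ⟨hux, huxx, huxxx⟩ := pxderiv_iterate_of_eq_two_sqrt_add (u := u)
    (q := fun t => t ^ 2 + t) (b := fun t => -2 * t - 1) (fun t y _ => by ring) (sub_pos.1 hw)
  have hut : HasDerivAt (fun r => u r x) (2 * ((2 * t + 1) / (2 * √(t ^ 2 + t - x))) - 2) t :=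
    have hw' : HasDerivAt (fun r => r ^ 2 + r - x) (2 * t + 1) t :=
      ((hasDerivAt_pow 2 t).add (hasDerivAt_id' t)).sub_const x |>.congr_deriv (by norm_num)
    ((hw'.sqrt hw.ne').const_mul 2).sub ((hasDerivAt_id' t).const_mul 2) |>.sub_const 1
      |>.congr_deriv (by ring)
  have hw_zpow : (t ^ 2 + t - x) ^ (-2 : ℤ) = √(t ^ 2 + t - x) ^ (-4 : ℤ) := by
    conv_lhs => rw [← Real.sq_sqrt hw.le, ← zpow_natCast, ← zpow_mul]
    norm_num
  have hs : 0 < √(t ^ 2 + t - x) := Real.sqrt_pos.2 hw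
  rw [ptderiv, hut.deriv, hux, huxx, huxxx, hw_zpow]
  simp only [u]
  generalize √(t ^ 2 + t - x) = s at hs ⊢
  have hprod : -s ^ (-1 : ℤ) * (-(1 / 2) * s ^ (-3 : ℤ)) = 1 / 2 * s ^ (-4 : ℤ) := by
    simp only [zpow_neg, zpow_ofNat]
    ring
  refine ⟨?_, ?_, hprod, hprod ▸ by positivity⟩
  · rw [zpow_neg_one]
    field_simp
    ring
  · simp only [zpow_neg, zpow_ofNat]
    ring
end

section
/- Let u : Ω → ℝ be a C² solution of the transport equation ∂u/∂t = u·∂u/∂x on an open set Ω ⊆ ℝ² with ∂u/∂x ≠ 0 on Ω. Then the function J(t,x) = (t·u_x(t,x) + 1)/u_x(t,x) = t + 1/u_x(t,x) satisfies ∂J/∂t = u·∂J/∂x on Ω. -/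
/-!
Since `J = t + 1/u_x`, one has `J_t - u J_x = 1 - (u_xt - u u_xx) / u_x²`. Differentiating the
equation `u_t = u u_x` in `x` gives `u_tx = u_x² + u u_xx`, and because `u` is `C²` the mixed
partials `u_xt` and `u_tx` agree (Schwarz), so the fraction is `1`.
-/

open Filter Topology Function

section Lines

variable {E : Type*} [NormedAddCommGroup E] [NormedSpace ℝ E] {f : ℝ × ℝ → E}
  {f' : ℝ × ℝ →L[ℝ] E} {t x : ℝ}

theorem HasFDerivAt.hasDerivAt_comp_prodMk_left (hf : HasFDerivAt f f' (t, x)) :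
    HasDerivAt (fun s => f (s, x)) (f' (1, 0)) t :=
  hf.comp_hasDerivAt t ((hasDerivAt_id t).prodMk (hasDerivAt_const t x))

theorem HasFDerivAt.hasDerivAt_comp_prodMk_right (hf : HasFDerivAt f f' (t, x)) :
    HasDerivAt (fun y => f (t, y)) (f' (0, 1)) x :=
  hf.comp_hasDerivAt x ((hasDerivAt_const x t).prodMk (hasDerivAt_id x))

end Lines

theorem ContDiffAt.eventually_differentiableAt {E F : Type*} [NormedAddCommGroup E]
    [NormedSpace ℝ E] [NormedAddCommGroup F] [NormedSpace ℝ F] {f : E → F} {p : E}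
    {n : WithTop ℕ∞} (hf : ContDiffAt ℝ n f p) (hn : 1 ≤ n) :
    ∀ᶠ q in 𝓝 p, DifferentiableAt ℝ f q :=
  ((hf.of_le hn).eventually (by simp)).mono fun _ hq => hq.differentiableAt one_ne_zero

section PartialDerivatives

variable {u v : ℝ → ℝ → ℝ} {t x : ℝ}

theorem ptderiv_eq_fderiv (h : DifferentiableAt ℝ (uncurry u) (t, x)) :
    ptderiv u t x = fderiv ℝ (uncurry u) (t, x) (1, 0) :=
  h.hasFDerivAt.hasDerivAt_comp_prodMk_left.deriv

theorem pxderiv_eq_fderiv (h : DifferentiableAt ℝ (uncurry u) (t, x)) :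
    pxderiv u t x = fderiv ℝ (uncurry u) (t, x) (0, 1) :=
  h.hasFDerivAt.hasDerivAt_comp_prodMk_right.deriv

theorem hasDerivAt_ptderiv (h : DifferentiableAt ℝ (uncurry u) (t, x)) :
    HasDerivAt (fun s => u s x) (ptderiv u t x) t :=
  ptderiv_eq_fderiv h ▸ h.hasFDerivAt.hasDerivAt_comp_prodMk_left

theorem hasDerivAt_pxderiv (h : DifferentiableAt ℝ (uncurry u) (t, x)) :
    HasDerivAt (fun y => u t y) (pxderiv u t x) x :=
  pxderiv_eq_fderiv h ▸ h.hasFDerivAt.hasDerivAt_comp_prodMk_right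

theorem ptderiv_congr (h : uncurry u =ᶠ[𝓝 (t, x)] uncurry v) : ptderiv u t x = ptderiv v t x :=
  (h.comp_tendsto ((continuous_id.prodMk continuous_const).tendsto t)).deriv_eq

theorem pxderiv_congr (h : uncurry u =ᶠ[𝓝 (t, x)] uncurry v) : pxderiv u t x = pxderiv v t x :=
  (h.comp_tendsto ((continuous_const.prodMk continuous_id).tendsto x)).deriv_eq

theorem uncurry_ptderiv_eventuallyEq {p : ℝ × ℝ}
    (h : ∀ᶠ q in 𝓝 p, DifferentiableAt ℝ (uncurry u) q) :
    uncurry (ptderiv u) =ᶠ[𝓝 p] fun q => fderiv ℝ (uncurry u) q (1, 0) :=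
  h.mono fun _ hq => ptderiv_eq_fderiv hq

theorem uncurry_pxderiv_eventuallyEq {p : ℝ × ℝ}
    (h : ∀ᶠ q in 𝓝 p, DifferentiableAt ℝ (uncurry u) q) :
    uncurry (pxderiv u) =ᶠ[𝓝 p] fun q => fderiv ℝ (uncurry u) q (0, 1) :=
  h.mono fun _ hq => pxderiv_eq_fderiv hq

theorem differentiableAt_uncurry_pxderiv {p : ℝ × ℝ} (hu : ContDiffAt ℝ 2 (uncurry u) p) :
    DifferentiableAt ℝ (uncurry (pxderiv u)) p := by
  refine DifferentiableAt.congr_of_eventuallyEq ?_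
    (uncurry_pxderiv_eventuallyEq (hu.eventually_differentiableAt one_le_two))
  exact ((hu.fderiv_right (m := 1) (by norm_num)).differentiableAt one_ne_zero).clm_apply
    (differentiableAt_const _)

theorem ptderiv_pxderiv_eq_pxderiv_ptderiv (hu : ContDiffAt ℝ 2 (uncurry u) (t, x)) :
    ptderiv (pxderiv u) t x = pxderiv (ptderiv u) t x := by
  have hdiff := hu.eventually_differentiableAt one_le_two
  have hφ : DifferentiableAt ℝ (fderiv ℝ (uncurry u)) (t, x) :=
    (hu.fderiv_right (m := 1) (by norm_num)).differentiableAt one_ne_zero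
  rw [ptderiv_congr (v := fun t x => fderiv ℝ (uncurry u) (t, x) (0, 1))
      (uncurry_pxderiv_eventuallyEq hdiff),
    pxderiv_congr (v := fun t x => fderiv ℝ (uncurry u) (t, x) (1, 0))
      (uncurry_ptderiv_eventuallyEq hdiff),
    ptderiv_eq_fderiv (hφ.clm_apply (differentiableAt_const _)),
    pxderiv_eq_fderiv (hφ.clm_apply (differentiableAt_const _))]
  change fderiv ℝ (fun q => fderiv ℝ (uncurry u) q (0, 1)) (t, x) (1, 0) =
    fderiv ℝ (fun q => fderiv ℝ (uncurry u) q (1, 0)) (t, x) (0, 1)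
  rw [fderiv_clm_apply hφ (differentiableAt_const _),
    fderiv_clm_apply hφ (differentiableAt_const _)]
  simpa using hu.isSymmSndFDerivAt (by simp) (1, 0) (0, 1)

end PartialDerivatives

/-- Along any C² solution of the transport equation `u_t = u u_x` with `u_x ≠ 0`,
the differential function `J = (t u_x + 1)/u_x` is an invariant: `∂J/∂t = u ∂J/∂x`. -/
theorem stmt9 (u : ℝ → ℝ → ℝ) (Ω : Set (ℝ × ℝ)) (hΩ : IsOpen Ω)
    (hu : ContDiffOn ℝ 2 (Function.uncurry u) Ω)
    (hux : ∀ t x : ℝ, (t, x) ∈ Ω → pxderiv u t x ≠ 0)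
    (heq : ∀ t x : ℝ, (t, x) ∈ Ω → ptderiv u t x = u t x * pxderiv u t x) :
    let J : ℝ → ℝ → ℝ := fun t x => (t * pxderiv u t x + 1) / pxderiv u t x
    ∀ t x : ℝ, (t, x) ∈ Ω → ptderiv J t x = u t x * pxderiv J t x := by
  intro J t x hp
  set a := pxderiv u
  have hu₂ : ContDiffAt ℝ 2 (uncurry u) (t, x) := hu.contDiffAt (hΩ.mem_nhds hp)
  have hu₁ : DifferentiableAt ℝ (uncurry u) (t, x) := hu₂.differentiableAt two_ne_zero
  have ha : DifferentiableAt ℝ (uncurry a) (t, x) := differentiableAt_uncurry_pxderiv hu₂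
  have hne := hux t x hp
  have hmixed : ptderiv a t x = a t x * a t x + u t x * pxderiv a t x := by
    have hpde : uncurry (ptderiv u) =ᶠ[𝓝 (t, x)] uncurry fun t x => u t x * a t x :=
      eventually_of_mem (hΩ.mem_nhds hp) fun q hq => heq q.1 q.2 hq
    rw [ptderiv_pxderiv_eq_pxderiv_ptderiv hu₂, pxderiv_congr hpde]
    exact ((hasDerivAt_pxderiv hu₁).mul (hasDerivAt_pxderiv ha)).deriv
  have hJt : ptderiv J t x = ((1 * a t x + t * ptderiv a t x) * a t x -
      (t * a t x + 1) * ptderiv a t x) / a t x ^ 2 :=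
    ((((hasDerivAt_id' t).mul (hasDerivAt_ptderiv ha)).add_const 1).div
      (hasDerivAt_ptderiv ha) hne).deriv
  have hJx : pxderiv J t x = (t * pxderiv a t x * a t x -
      (t * a t x + 1) * pxderiv a t x) / a t x ^ 2 :=
    ((((hasDerivAt_pxderiv ha).const_mul t).add_const 1).div (hasDerivAt_pxderiv ha) hne).deriv
  rw [hJt, hJx, hmixed]
  field_simp
  ring
end

section
/- Let u : Ω → ℝ be a C¹ solution of the transport equation ∂u/∂t = u·∂u/∂x on an open set Ω ⊆ ℝ², and let η, f : Ω → ℝ be C¹ functions such that the classical determining identity ∂η/∂t − u_x·η − u·∂η/∂x = 0 holds on Ω. Then the product η* = f·η satisfies ∂η*/∂t − u_x·η* − u·∂η*/∂x = η·(∂f/∂t − u·∂f/∂x) on Ω; in particular, this expression vanishes at every point of Ω where η = 0. Hence f·η satisfies the nonclassical determining condition for the transport equation. -/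
section Curry

variable {𝕜 E F G : Type*} [NontriviallyNormedField 𝕜]
  [NormedAddCommGroup E] [NormedSpace 𝕜 E] [NormedAddCommGroup F] [NormedSpace 𝕜 F]
  [NormedAddCommGroup G] [NormedSpace 𝕜 G] {g : E → F → G} {a : E} {b : F}

theorem DifferentiableAt.curry_left (h : DifferentiableAt 𝕜 (Function.uncurry g) (a, b)) :
    DifferentiableAt 𝕜 (fun s => g s b) a :=
  h.comp (f := fun s => (s, b)) a (differentiableAt_id.prodMk (differentiableAt_const b))

theorem DifferentiableAt.curry_right (h : DifferentiableAt 𝕜 (Function.uncurry g) (a, b)) :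
    DifferentiableAt 𝕜 (fun y => g a y) b :=
  h.comp (f := fun y => (a, y)) b ((differentiableAt_const a).prodMk differentiableAt_id)

end Curry

section Transport

variable {u f η : ℝ → ℝ → ℝ} {t x : ℝ}

theorem ptderiv_mul (hf : DifferentiableAt ℝ (fun s => f s x) t)
    (hη : DifferentiableAt ℝ (fun s => η s x) t) :
    ptderiv (fun t x => f t x * η t x) t x = ptderiv f t x * η t x + f t x * ptderiv η t x :=
  deriv_fun_mul hf hη

theorem pxderiv_mul (hf : DifferentiableAt ℝ (fun y => f t y) x)
    (hη : DifferentiableAt ℝ (fun y => η t y) x) :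
    pxderiv (fun t x => f t x * η t x) t x = pxderiv f t x * η t x + f t x * pxderiv η t x :=
  deriv_fun_mul hf hη

/-- The linearization of `u_t - u u_x` at `u` in the direction `η`. -/
noncomputable def transportLinearization (u η : ℝ → ℝ → ℝ) (t x : ℝ) : ℝ :=
  ptderiv η t x - pxderiv u t x * η t x - u t x * pxderiv η t x

theorem transportLinearization_mul
    (hf : DifferentiableAt ℝ (Function.uncurry f) (t, x))
    (hη : DifferentiableAt ℝ (Function.uncurry η) (t, x)) :
    transportLinearization u (fun t x => f t x * η t x) t x =
      f t x * transportLinearization u η t x + η t x * (ptderiv f t x - u t x * pxderiv f t x) := by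
  simp only [transportLinearization]
  rw [ptderiv_mul hf.curry_left hη.curry_left, pxderiv_mul hf.curry_right hη.curry_right]
  ring

end Transport

theorem stmt14_general (u η f : ℝ → ℝ → ℝ) (Ω : Set (ℝ × ℝ)) (hΩ : IsOpen Ω)
    (hη : ContDiffOn ℝ 1 (Function.uncurry η) Ω)
    (hf : ContDiffOn ℝ 1 (Function.uncurry f) Ω)
    (hdet : ∀ t x : ℝ, (t, x) ∈ Ω →
      ptderiv η t x - pxderiv u t x * η t x - u t x * pxderiv η t x = 0) :
    let ηstar : ℝ → ℝ → ℝ := fun t x => f t x * η t x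
    ∀ t x : ℝ, (t, x) ∈ Ω →
      (ptderiv ηstar t x - pxderiv u t x * ηstar t x - u t x * pxderiv ηstar t x
          = η t x * (ptderiv f t x - u t x * pxderiv f t x)) ∧
      (η t x = 0 →
        ptderiv ηstar t x - pxderiv u t x * ηstar t x - u t x * pxderiv ηstar t x = 0) := by
  intro ηstar t x hx
  have hnhds := hΩ.mem_nhds hx
  have hf' := (hf.contDiffAt hnhds).differentiableAt one_ne_zero
  have hη' := (hη.contDiffAt hnhds).differentiableAt one_ne_zero
  have key : transportLinearization u ηstar t x =
      η t x * (ptderiv f t x - u t x * pxderiv f t x) := by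
    rw [transportLinearization_mul hf' hη', transportLinearization, hdet t x hx, mul_zero,
      zero_add]
  exact ⟨key, fun hη0 => key.trans (by rw [hη0, zero_mul])⟩

/-- If `u` is a C¹ solution of the transport equation `u_t = u u_x` on an open `Ω` and
`η, f` are C¹ functions with `∂η/∂t - u_x η - u ∂η/∂x = 0` on `Ω` (classical determining
identity along `u`), then `η* = f·η` satisfies
`∂η*/∂t - u_x η* - u ∂η*/∂x = η (∂f/∂t - u ∂f/∂x)` on `Ω`; in particular this vanishes
wherever `η = 0`, so `f·η` satisfies the nonclassical determining condition. -/
theorem stmt14 (u η f : ℝ → ℝ → ℝ) (Ω : Set (ℝ × ℝ)) (hΩ : IsOpen Ω)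
    (hu : ContDiffOn ℝ 1 (Function.uncurry u) Ω)
    (hη : ContDiffOn ℝ 1 (Function.uncurry η) Ω)
    (hf : ContDiffOn ℝ 1 (Function.uncurry f) Ω)
    (heq : ∀ t x : ℝ, (t, x) ∈ Ω → ptderiv u t x = u t x * pxderiv u t x)
    (hdet : ∀ t x : ℝ, (t, x) ∈ Ω →
      ptderiv η t x - pxderiv u t x * η t x - u t x * pxderiv η t x = 0) :
    let ηstar : ℝ → ℝ → ℝ := fun t x => f t x * η t x
    ∀ t x : ℝ, (t, x) ∈ Ω →
      (ptderiv ηstar t x - pxderiv u t x * ηstar t x - u t x * pxderiv ηstar t x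
          = η t x * (ptderiv f t x - u t x * pxderiv f t x)) ∧
      (η t x = 0 →
        ptderiv ηstar t x - pxderiv u t x * ηstar t x - u t x * pxderiv ηstar t x = 0) :=
  stmt14_general u η f Ω hΩ hη hf hdet
end

section
/- Fix t ∈ ℝ and real constants c, F₁, F₂, F₃, and let s(x) = t² + t − x. On the set {x : s(x) > 0}, the function v(x) = (2c/15)·s(x)^{−2} + F₁ + F₂·s(x)^{−1/2} + F₃·s(x)^{1/2} satisfies the third-order linear ordinary differential equation −v‴(x)·s(x)^{−1/2} − (3/4)·v′(x)·s(x)^{−5/2} + 3·v″(x)·s(x)^{−3/2} + c·s(x)^{−11/2} = 0. -/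
/-!
With `s = k - x`, the left-hand side without the source term `c s^(-11/2)` is a linear operator
`L v = -v''' s^(-1/2) - (3/4) v' s^(-5/2) + 3 v'' s^(-3/2)`, and since
`(d/dx)^n s^p = (-1)^n p (p-1) ⋯ (p-n+1) s^(p-n)` it acts on powers diagonally:
`L s^p = p (p^2 - 1/4) s^(p - 7/2)`. Hence `1`, `s^(-1/2)` and `s^(1/2)` lie in its kernel, while
`L s^(-2) = -(15/2) s^(-11/2)`, which the coefficient `2c/15` turns into `-c s^(-11/2)`.
-/

open Real

lemma iteratedDeriv_rpow_const_sub (k r : ℝ) (n : ℕ) (x : ℝ) :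
    iteratedDeriv n (fun y => (k - y) ^ r) x
      = (-1) ^ n * (descPochhammer ℝ n).eval r * (k - x) ^ (r - n) := by
  simp only [iteratedDeriv_comp_const_sub n (fun y => y ^ r) k, iteratedDeriv_eq_iterate,
    iter_deriv_rpow_const, smul_eq_mul, mul_assoc]

lemma contDiffAt_rpow_const_sub {k x : ℝ} (r : ℝ) (n : ℕ) (hx : 0 < k - x) :
    ContDiffAt ℝ n (fun y => (k - y) ^ r) x :=
  (contDiffAt_rpow_const_of_ne hx.ne').comp x (contDiffAt_const.sub contDiffAt_id)

noncomputable def odeOp (k : ℝ) (f : ℝ → ℝ) (x : ℝ) : ℝ :=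
  -iteratedDeriv 3 f x * (k - x) ^ (-(1 / 2) : ℝ)
    - 3 / 4 * iteratedDeriv 1 f x * (k - x) ^ (-(5 / 2) : ℝ)
    + 3 * iteratedDeriv 2 f x * (k - x) ^ (-(3 / 2) : ℝ)

lemma odeOp_sum {ι : Type*} (I : Finset ι) (a : ι → ℝ) (f : ι → ℝ → ℝ) {k x : ℝ}
    (hf : ∀ i ∈ I, ContDiffAt ℝ 3 (f i) x) :
    odeOp k (fun y => ∑ i ∈ I, a i * f i y) x = ∑ i ∈ I, a i * odeOp k (f i) x := by
  have hd : ∀ n ≤ 3, iteratedDeriv n (fun y => ∑ i ∈ I, a i * f i y) x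
      = ∑ i ∈ I, a i * iteratedDeriv n (f i) x := fun n hn => by
    rw [iteratedDeriv_fun_sum fun i hi =>
      contDiffAt_const.mul ((hf i hi).of_le (by exact_mod_cast hn))]
    simp only [iteratedDeriv_const_mul_field]
  simp only [odeOp, hd 1 (by norm_num), hd 2 (by norm_num), hd 3 (by norm_num), Finset.sum_mul,
    Finset.mul_sum, ← Finset.sum_neg_distrib, ← Finset.sum_sub_distrib,
    ← Finset.sum_add_distrib]
  refine Finset.sum_congr rfl fun i _ => by ring

lemma odeOp_rpow_const_sub {k x : ℝ} (p : ℝ) (hx : 0 < k - x) :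
    odeOp k (fun y => (k - y) ^ p) x = p * (p ^ 2 - 1 / 4) * (k - x) ^ (p - 7 / 2) := by
  have key (m q : ℝ) (h : m + q = 7 / 2) :
      (k - x) ^ (p - m) * (k - x) ^ (-q) = (k - x) ^ (p - 7 / 2) := by
    rw [← rpow_add hx]; congr 1; linarith
  simp only [odeOp, iteratedDeriv_rpow_const_sub, descPochhammer_succ_right, descPochhammer_zero,
    Polynomial.eval_mul, Polynomial.eval_sub, Polynomial.eval_X,
    Polynomial.eval_ofNat, Polynomial.eval_one, Polynomial.eval_zero, Nat.cast_ofNat, Nat.cast_one,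
    Nat.cast_zero]
  linear_combination (p * (p - 1) * (p - 2)) * key 3 (1 / 2) (by norm_num)
    + (3 / 4 * p) * key 1 (5 / 2) (by norm_num) + (3 * p * (p - 1)) * key 2 (3 / 2) (by norm_num)

/-- For fixed `t` and `s(x) = t² + t - x`, the function
`v = (2c/15) s⁻² + F₁ + F₂ s^{-1/2} + F₃ s^{1/2}` satisfies the third-order ODE
`-v''' s^{-1/2} - (3/4) v' s^{-5/2} + 3 v'' s^{-3/2} + c s^{-11/2} = 0` on `{s > 0}`. -/
theorem stmt15 (t c F₁ F₂ F₃ : ℝ) :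
    let s : ℝ → ℝ := fun x => t ^ 2 + t - x
    let v : ℝ → ℝ := fun x =>
      2 * c / 15 * s x ^ (-2 : ℝ) + F₁ + F₂ * s x ^ (-(1 / 2) : ℝ)
        + F₃ * s x ^ ((1 / 2) : ℝ)
    ∀ x : ℝ, s x > 0 →
      -(deriv (deriv (deriv v)) x) * s x ^ (-(1 / 2) : ℝ)
          - 3 / 4 * deriv v x * s x ^ (-(5 / 2) : ℝ)
          + 3 * deriv (deriv v) x * s x ^ (-(3 / 2) : ℝ)
          + c * s x ^ (-(11 / 2) : ℝ) = 0 := by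
  intro s v x hx
  have hv : v = fun y => ∑ i : Fin 4, ![2 * c / 15, F₁, F₂, F₃] i
      * (t ^ 2 + t - y) ^ ((![-2, 0, -(1 / 2), 1 / 2] : Fin 4 → ℝ) i) := by
    funext y
    simp only [v, s, Fin.sum_univ_four, Matrix.cons_val, rpow_zero]
    ring
  have hop : odeOp (t ^ 2 + t) v x = -(deriv (deriv (deriv v)) x) * s x ^ (-(1 / 2) : ℝ)
      - 3 / 4 * deriv v x * s x ^ (-(5 / 2) : ℝ)
      + 3 * deriv (deriv v) x * s x ^ (-(3 / 2) : ℝ) := by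
    simp only [odeOp, iteratedDeriv_eq_iterate]
    rfl
  rw [← hop, hv, odeOp_sum _ _ _ fun i _ => contDiffAt_rpow_const_sub _ 3 hx]
  simp only [odeOp_rpow_const_sub _ hx, Fin.sum_univ_four, Matrix.cons_val, s]
  norm_num
  ring
end

section
/- Let A, B, C be real constants. Define, on the open set Ω = {(t,x) ∈ ℝ² : s > 0} where s = t² + t − x, the functions u₀(t,x) = 2√s − 2t − 1 and u₁(t,x) = −(9/128)·s^{−9/2} + (−2At + B) + (At² − Bt + C)·s^{−1/2} + A·s^{1/2}. Then ∂u₀/∂t = u₀·∂u₀/∂x and ∂u₁/∂t = u₀·∂u₁/∂x + u₁·∂u₀/∂x + (∂³u₀/∂x³)² at every point of Ω; that is, u = u₀ + ε u₁ solves the nonintegrable equation u_t = u u_x + ε (u_xxx)² up to terms of order ε². -/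
open Real

/-!
Put `r = √s` with `s = t² + t - x`. Then `u₀ = 2r - 2t - 1`, `r_t = (2t + 1)/(2r)` and
`r_x = -1/(2r)`, so the characteristic derivative `D = ∂_t - u₀ ∂_x` satisfies `D r = 1`;
hence `D u₀ = 2 - 2 = 0` and `u₀_x = -1/r`. The linearised operator
`v ↦ v_t - u₀ v_x - u₀_x v` therefore acts on a function `f(t, r)` as `f_t + f_r + f/r`:
it annihilates `(-2At + B) + (At² - Bt + C)/r + Ar` and sends `-(9/128) r⁻⁹` to
`(9/16) r⁻¹⁰ = (u₀_xxx)²`, because `u₀_xxx = -(3/4) r⁻⁵`. Once the half-integer powers of `s`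
are written as powers of `r`, both equations are rational identities in `t` and `r`.
-/

/-- For `s < 0` the left side is `|s| ^ (n/2) * cos (n π / 2)`, which vanishes for odd `n`, as
does `√s ^ n = 0 ^ n`. -/
theorem rpow_div_two_eq_sqrt_zpow (s : ℝ) {n : ℤ} (hn : Odd n) :
    s ^ ((n : ℝ) / 2) = √s ^ n := by
  rcases lt_or_ge s 0 with hs | hs
  · obtain ⟨k, rfl⟩ := hn
    have hcos : cos (((2 * k + 1 : ℤ) : ℝ) / 2 * π) = 0 :=
      cos_eq_zero_iff.mpr ⟨k, by push_cast; ring⟩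
    rw [rpow_def_of_neg hs, hcos, mul_zero, sqrt_eq_zero_of_nonpos hs.le,
      zero_zpow _ (by omega)]
  · rw [sqrt_eq_rpow, ← rpow_intCast, ← rpow_mul hs]
    ring_nf

theorem iteratedDeriv_const_sub_rpow (n : ℕ) (a p x : ℝ) :
    iteratedDeriv n (fun y => (a - y) ^ p) x
      = (-1) ^ n * (descPochhammer ℝ n).eval p * (a - x) ^ (p - n) := by
  rw [iteratedDeriv_comp_const_sub n (fun y => y ^ p), iteratedDeriv_eq_iterate]
  dsimp only
  rw [iter_deriv_rpow_const, smul_eq_mul, mul_assoc]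

theorem iteratedDeriv_three_sqrt_const_sub (a x : ℝ) :
    iteratedDeriv 3 (fun y => √(a - y)) x = -(3 / 8) * √(a - x) ^ (-5 : ℤ) := by
  simp only [sqrt_eq_rpow]
  rw [iteratedDeriv_const_sub_rpow, ← sqrt_eq_rpow,
    ← rpow_div_two_eq_sqrt_zpow _ (by decide : Odd (-5 : ℤ))]
  norm_num [descPochhammer_succ_right]

theorem pxderiv_pxderiv_pxderiv_eq_iteratedDeriv (u : ℝ → ℝ → ℝ) (t x : ℝ) :
    pxderiv (pxderiv (pxderiv u)) t x = iteratedDeriv 3 (u t) x := by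
  rw [iteratedDeriv_eq_iterate]
  rfl

theorem hasDerivAt_sqrt_sq_add_self_sub {t x : ℝ} (hs : t ^ 2 + t - x ≠ 0) :
    HasDerivAt (fun τ => √(τ ^ 2 + τ - x)) ((2 * t + 1) / (2 * √(t ^ 2 + t - x))) t := by
  have hpoly : HasDerivAt (fun τ => τ ^ 2 + τ - x) (2 * t + 1) t := by
    simpa using ((hasDerivAt_pow 2 t).add (hasDerivAt_id t)).sub_const x
  exact hpoly.sqrt hs

theorem hasDerivAt_sqrt_const_sub {a x : ℝ} (hs : a - x ≠ 0) :
    HasDerivAt (fun y => √(a - y)) (-1 / (2 * √(a - x))) x :=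
  ((hasDerivAt_id x).const_sub a).sqrt hs

/-- `u₁` in the variables `t` and `r = √(t² + t - x)`. -/
noncomputable def firstCorrection (A B C t r : ℝ) : ℝ :=
  -(9 / 128) * r ^ (-9 : ℤ) + (-2 * A * t + B) + (A * t ^ 2 - B * t + C) * r ^ (-1 : ℤ) + A * r

theorem firstCorrection_sqrt (A B C t x : ℝ) :
    firstCorrection A B C t √(t ^ 2 + t - x)
      = -(9 / 128) * (t ^ 2 + t - x) ^ (-(9 / 2) : ℝ) + (-2 * A * t + B)
        + (A * t ^ 2 - B * t + C) * (t ^ 2 + t - x) ^ (-(1 / 2) : ℝ)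
        + A * (t ^ 2 + t - x) ^ ((1 / 2) : ℝ) := by
  rw [show (-(9 / 2) : ℝ) = ((-9 : ℤ) : ℝ) / 2 by norm_num,
    show (-(1 / 2) : ℝ) = ((-1 : ℤ) : ℝ) / 2 by norm_num,
    rpow_div_two_eq_sqrt_zpow _ (by decide), rpow_div_two_eq_sqrt_zpow _ (by decide),
    ← sqrt_eq_rpow, firstCorrection]

theorem HasDerivAt.firstCorrection {T R : ℝ → ℝ} {T' R' z : ℝ} (A B C : ℝ)
    (hT : HasDerivAt T T' z) (hR : HasDerivAt R R' z) (hR0 : R z ≠ 0) :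
    HasDerivAt (fun w => _root_.firstCorrection A B C (T w) (R w))
      ((-2 * A + (2 * A * T z - B) * R z ^ (-1 : ℤ)) * T'
        + (81 / 128 * R z ^ (-10 : ℤ) - (A * T z ^ 2 - B * T z + C) * R z ^ (-2 : ℤ) + A) * R')
      z := by
  have hpow (m : ℤ) := (hasDerivAt_zpow m (R z) (Or.inl hR0)).comp z hR
  have hcoef : HasDerivAt (fun w => A * T w ^ 2 - B * T w + C) ((2 * A * T z - B) * T') z := by
    refine ((((hT.pow 2).const_mul A).sub (hT.const_mul B)).add_const C).congr_deriv ?_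
    push_cast
    ring
  refine ((((hpow (-9)).const_mul (-(9 / 128))).add ((hT.const_mul (-2 * A)).add_const B)).add
    (hcoef.mul (hpow (-1))) |>.add (hR.const_mul A)).congr_deriv ?_
  norm_num
  ring

/-- With `s = t² + t - x`, the pair `u₀ = 2√s - 2t - 1`,
`u₁ = -(9/128) s^{-9/2} + (-2At + B) + (At² - Bt + C) s^{-1/2} + A s^{1/2}`
solves the nonintegrable equation `u_t = u u_x + ε (u_xxx)²` up to terms of order `ε²`
on `{s > 0}`: `∂u₀/∂t = u₀ ∂u₀/∂x` and
`∂u₁/∂t = u₀ ∂u₁/∂x + u₁ ∂u₀/∂x + (∂³u₀/∂x³)²`. -/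
theorem stmt19 (A B C : ℝ) :
    let u₀ : ℝ → ℝ → ℝ := fun t x => 2 * Real.sqrt (t ^ 2 + t - x) - 2 * t - 1
    let u₁ : ℝ → ℝ → ℝ := fun t x =>
      -(9 / 128) * (t ^ 2 + t - x) ^ (-(9 / 2) : ℝ) + (-2 * A * t + B)
        + (A * t ^ 2 - B * t + C) * (t ^ 2 + t - x) ^ (-(1 / 2) : ℝ)
        + A * (t ^ 2 + t - x) ^ ((1 / 2) : ℝ)
    ∀ t x : ℝ, t ^ 2 + t - x > 0 →
      ptderiv u₀ t x = u₀ t x * pxderiv u₀ t x ∧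
      ptderiv u₁ t x
        = u₀ t x * pxderiv u₁ t x + u₁ t x * pxderiv u₀ t x
          + (pxderiv (pxderiv (pxderiv u₀)) t x) ^ 2 := by
  intro u₀ u₁ t x hs
  have hu₁ : u₁ = fun t x => firstCorrection A B C t √(t ^ 2 + t - x) :=
    funext₂ fun τ y => (firstCorrection_sqrt A B C τ y).symm
  have hr : √(t ^ 2 + t - x) ≠ 0 := (sqrt_pos.2 hs).ne'
  have hrt := hasDerivAt_sqrt_sq_add_self_sub hs.ne'
  have hrx := hasDerivAt_sqrt_const_sub (a := t ^ 2 + t) hs.ne'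
  have u₀_t :
      HasDerivAt (fun τ => u₀ τ x) (2 * ((2 * t + 1) / (2 * √(t ^ 2 + t - x))) - 2) t :=
    ((hrt.const_mul 2).sub ((hasDerivAt_id' t).const_mul 2) |>.sub_const 1).congr_deriv (by ring)
  have u₀_x : HasDerivAt (fun y => u₀ t y) (2 * (-1 / (2 * √(t ^ 2 + t - x)))) x :=
    ((hrx.const_mul 2).sub_const _).sub_const _
  have u₀_xxx :
      pxderiv (pxderiv (pxderiv u₀)) t x = -(3 / 4) * √(t ^ 2 + t - x) ^ (-5 : ℤ) := by
    have hu₀ : u₀ t = fun y => (-2 * t - 1) + 2 * √(t ^ 2 + t - y) := by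
      funext y
      ring
    rw [pxderiv_pxderiv_pxderiv_eq_iteratedDeriv, hu₀, iteratedDeriv_const_add three_pos,
      iteratedDeriv_const_mul_field, iteratedDeriv_three_sqrt_const_sub]
    ring
  rw [u₀_xxx, hu₁]
  simp only [ptderiv, pxderiv]
  rw [u₀_t.deriv, u₀_x.deriv, ((hasDerivAt_id' t).firstCorrection A B C hrt hr).deriv,
    ((hasDerivAt_const x t).firstCorrection A B C hrx hr).deriv]
  simp only [u₀, firstCorrection]
  generalize √(t ^ 2 + t - x) = r at hr ⊢
  constructor <;> field_simp <;> ring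
end
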